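/- arXiv:1701.04385 — 2 statements merged into one kernel-verified Lean document; each statement's English description precedes it below -/
import Mathlib

section
/- Let (V, E, ends) be a nonempty finite connected multigraph with vertex weights h : V → ℕ, of genus g = #E − #V + 1 + Σ_v h(v), with g ≥ 2, and assume stability: 2h(v) − 2 + deg(v) > 0 for every vertex v. Then #E = 3g − 3 if and only if h(v) = 0 and deg(v) = 3 for every vertex v; and in that case also #V = 2g − 2. -/
/-!
Each edge contributes `2` to the degree sum, so `2 #E = Σ_v deg v`, and substituting this into
the genus formula gives `3g − 3 − #E = Σ_v (3 h(v) + deg v − 3)`. Stability says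
`2 h(v) + deg v ≥ 3`, so every summand is at least `h(v) ≥ 0`, and it vanishes exactly when
`h(v) = 0` and `deg v = 3`. Hence `#E ≤ 3g − 3`, with equality iff the graph is trivalent with
zero weights, and then `2 #E = 3 #V` gives `#V = 2g − 2`.
-/

/-- The degree of a vertex `v` in a multigraph given by an endpoint map
`ends : E → Sym2 V`: each edge incident to `v` counts once, and a loop at `v`
counts twice. -/
def multigraphDeg {V E : Type*} [Fintype E] [DecidableEq V]
    (ends : E → Sym2 V) (v : V) : ℕ :=
  ∑ e : E, (if v ∈ ends e then (if (ends e).IsDiag then 2 else 1) else 0)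

/-- A multigraph is connected if any two vertices are related by the
reflexive-transitive closure of the edge relation. -/
def MultigraphConnected {V E : Type*} (ends : E → Sym2 V) : Prop :=
  ∀ u v : V, Relation.ReflTransGen (fun a b => ∃ e : E, ends e = s(a, b)) u v

open Finset

theorem sum_ite_mem_sym2 {V : Type*} [Fintype V] [DecidableEq V] (z : Sym2 V) :
    ∑ v : V, (if v ∈ z then (if z.IsDiag then 2 else 1) else 0) = 2 := by
  induction z using Sym2.ind with
  | _ a b =>
    obtain rfl | hab := eq_or_ne a b
    · simp
    · have hnd : ¬ s(a, b).IsDiag := by simpa using hab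
      simp [hnd, sum_boole, filter_or, filter_eq', card_pair hab]

theorem sum_multigraphDeg {V E : Type*} [Fintype V] [Fintype E] [DecidableEq V]
    (ends : E → Sym2 V) :
    ∑ v : V, multigraphDeg ends v = 2 * Fintype.card E := by
  unfold multigraphDeg
  rw [sum_comm, sum_congr rfl fun e _ => sum_ite_mem_sym2 (ends e), sum_const, card_univ,
    smul_eq_mul, mul_comm]

theorem three_mul_genus_sub_card_edges {V E : Type*} [Fintype V] [Fintype E] [DecidableEq V]
    (ends : E → Sym2 V) (h : V → ℕ) :
    3 * ((Fintype.card E : ℤ) - Fintype.card V + 1 + ∑ v : V, (h v : ℤ)) - 3 - Fintype.card E =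
      ∑ v : V, (3 * (h v : ℤ) + multigraphDeg ends v - 3) := by
  have handshake : ∑ v : V, (multigraphDeg ends v : ℤ) = 2 * Fintype.card E := by
    exact_mod_cast sum_multigraphDeg ends
  rw [sum_sub_distrib, sum_add_distrib, ← mul_sum, handshake, sum_const, card_univ,
    nsmul_eq_mul]
  ring

theorem three_mul_add_sub_three_nonneg {n d : ℕ} (hs : 0 < 2 * (n : ℤ) - 2 + d) :
    0 ≤ 3 * (n : ℤ) + d - 3 := by
  omega

theorem three_mul_add_sub_three_eq_zero_iff {n d : ℕ} (hs : 0 < 2 * (n : ℤ) - 2 + d) :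
    3 * (n : ℤ) + d - 3 = 0 ↔ n = 0 ∧ d = 3 := by
  omega

theorem max_edges_iff_trivalent_general {V E : Type*} [Fintype V] [Fintype E]
    [DecidableEq V]
    (ends : E → Sym2 V) (h : V → ℕ) (g : ℤ)
    (hg : g = (Fintype.card E : ℤ) - (Fintype.card V : ℤ) + 1 + ∑ v : V, (h v : ℤ))
    (hstable : ∀ v : V, 0 < 2 * (h v : ℤ) - 2 + (multigraphDeg ends v : ℤ)) :
    ((Fintype.card E : ℤ) = 3 * g - 3 ↔ ∀ v : V, h v = 0 ∧ multigraphDeg ends v = 3) ∧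
    ((Fintype.card E : ℤ) = 3 * g - 3 → (Fintype.card V : ℤ) = 2 * g - 2) := by
  have hexcess := three_mul_genus_sub_card_edges ends h
  rw [← hg] at hexcess
  have hiff :
      (Fintype.card E : ℤ) = 3 * g - 3 ↔ ∀ v : V, h v = 0 ∧ multigraphDeg ends v = 3 := by
    rw [eq_comm, ← sub_eq_zero, hexcess,
      sum_eq_zero_iff_of_nonneg fun v _ => three_mul_add_sub_three_nonneg (hstable v)]
    simp only [mem_univ, true_implies]
    exact forall_congr' fun v => three_mul_add_sub_three_eq_zero_iff (hstable v)
  refine ⟨hiff, fun hE => ?_⟩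
  have htri := hiff.mp hE
  have hweights : ∑ v : V, (h v : ℤ) = 0 := sum_eq_zero fun v _ => by simp [(htri v).1]
  have hedges : 2 * Fintype.card E = 3 * Fintype.card V := by
    simpa [fun v => (htri v).2, mul_comm] using (sum_multigraphDeg ends).symm
  rw [hg, hweights]
  omega

/-- For a nonempty connected stable vertex-weighted multigraph of genus `g ≥ 2`, the
number of edges equals `3g − 3` if and only if every vertex has weight `0` and degree
`3`; and in that case the number of vertices is `2g − 2`. -/
theorem max_edges_iff_trivalent {V E : Type*} [Fintype V] [Fintype E]
    [DecidableEq V] [Nonempty V]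
    (ends : E → Sym2 V) (h : V → ℕ) (g : ℤ)
    (hconn : MultigraphConnected ends)
    (hg : g = (Fintype.card E : ℤ) - (Fintype.card V : ℤ) + 1 + ∑ v : V, (h v : ℤ))
    (hg2 : 2 ≤ g)
    (hstable : ∀ v : V, 0 < 2 * (h v : ℤ) - 2 + (multigraphDeg ends v : ℤ)) :
    ((Fintype.card E : ℤ) = 3 * g - 3 ↔ ∀ v : V, h v = 0 ∧ multigraphDeg ends v = 3) ∧
    ((Fintype.card E : ℤ) = 3 * g - 3 → (Fintype.card V : ℤ) = 2 * g - 2) :=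
  max_edges_iff_trivalent_general ends h g hg hstable
end

section
/- Consider the set C of the 51 functions c : {1,2,3,4} → {1,2,3,4} with c(v) ≠ v for all v such that the system of strict inequalities M({v, c(v)}) < M({v, u}) (for all vertices v and all u ∉ {v, c(v)}) admits a solution M : Edges(K4) → ℝ with all values positive. The symmetric group S4 acts on C by σ · c = σ ∘ c ∘ σ⁻¹. This action has exactly 4 orbits, of cardinalities 3, 12, 12 and 24. -/
/-! If every vertex `v` has `c v` as its unique nearest neighbour for some edge weight, the
weight of the edge `{c^[k] v, c^[k+1] v}` does not increase with `k`, and drops strictly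
at every step with `c^[k+2] v ≠ c^[k] v`. Going once around a cycle of `c` therefore
forces all cycles to be 2-cycles. Conversely, every fixed-point-free map on `Fin 4` whose
cycles are 2-cycles is realised by weighting each edge `{v, c v}` by the distance of `v`
to its 2-cycle. This describes the chamber functions by a decidable condition, and the
orbit decomposition is then a finite computation. -/

/-- The edges of the complete graph `K4` on the vertex set `Fin 4`: the six
2-element subsets of the vertices. -/
def K4Edge : Type := {e : Finset (Fin 4) // e.card = 2}

instance : Fintype K4Edge := Subtype.fintype _

/-- The `51` functions `c` on the vertices of `K4` with `c v ≠ v` for all `v` such that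
some positive metric `M` on the edges of `K4` makes the edge `{v, c v}` the unique
minimum of `M` among the three edges incident to `v`, for every vertex `v`: they index
the open chambers of the cone of metrics on `K4`. -/
def chamberFns : Set (Fin 4 → Fin 4) :=
  {c | (∀ v, c v ≠ v) ∧
    ∃ M : K4Edge → ℝ, (∀ e : K4Edge, 0 < M e) ∧
      ∀ v u : Fin 4, u ≠ v → u ≠ c v →
        ∀ e e' : K4Edge, e.val = {v, c v} → e'.val = {v, u} → M e < M e'}

/-- The orbit of a function `c : Fin 4 → Fin 4` under the conjugation action
`σ · c = σ ∘ c ∘ σ⁻¹` of the symmetric group `S4`. -/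
def conjOrbit (c : Fin 4 → Fin 4) : Set (Fin 4 → Fin 4) :=
  {c' | ∃ σ : Equiv.Perm (Fin 4), c' = σ ∘ c ∘ σ.symm}

open Finset Function

section NearestNeighbour

variable {V α : Type*} [DecidableEq V]

def IsNearestNeighbourMap [LT α] (d : Finset V → α) (c : V → V) : Prop :=
  ∀ v u, u ≠ v → u ≠ c v → d {v, c v} < d {v, u}

namespace IsNearestNeighbourMap

variable {d : Finset V → α} {c : V → V}

theorem conj [LT α] (h : IsNearestNeighbourMap d c) (σ : Equiv.Perm V) :
    IsNearestNeighbourMap (fun s => d (s.map σ.symm.toEmbedding)) (σ ∘ c ∘ σ.symm) := by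
  intro v u hu huc
  have := h (σ.symm v) (σ.symm u) (by simpa using hu) (by simpa [Equiv.symm_apply_eq] using huc)
  simpa [Finset.map_insert] using this

variable [Preorder α] (h : IsNearestNeighbourMap d c) (hc : ∀ v, c v ≠ v)
include h hc

theorem edge_apply_lt {v : V} (hv : c (c v) ≠ v) : d {c v, c (c v)} < d {v, c v} := by
  rw [pair_comm v]
  exact h (c v) v (hc v).symm (Ne.symm hv)

theorem edge_apply_le (v : V) : d {c v, c (c v)} ≤ d {v, c v} := by
  by_cases hv : c (c v) = v
  · rw [hv, pair_comm]
  · exact (h.edge_apply_lt hc hv).le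

theorem antitone_edge_iterate (v : V) : Antitone fun k => d {c^[k] v, c^[k + 1] v} :=
  antitone_nat_of_succ_le fun k => by
    simpa only [iterate_succ_apply'] using h.edge_apply_le hc (c^[k] v)

theorem apply_apply_eq_of_isPeriodicPt {n : ℕ} {v : V} (hn : 0 < n) (hv : IsPeriodicPt c n v) :
    c (c v) = v := by
  by_contra hv2
  have hle := h.antitone_edge_iterate hc v hn
  simp only [iterate_succ_apply', hv.eq] at hle
  exact lt_irrefl _ ((h.edge_apply_lt hc hv2).trans_le hle)

end IsNearestNeighbourMap

end NearestNeighbour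

theorem mem_chamberFns_iff {c : Fin 4 → Fin 4} :
    c ∈ chamberFns ↔ (∀ v, c v ≠ v) ∧ ∃ d : Finset (Fin 4) → ℝ, IsNearestNeighbourMap d c := by
  constructor
  · rintro ⟨hc, M, -, hM⟩
    refine ⟨hc, fun s => if hs : s.card = 2 then M ⟨s, hs⟩ else 0, fun v u hu huc => ?_⟩
    simp only [card_pair (hc v).symm, card_pair hu.symm, dite_true]
    exact hM v u hu huc _ _ rfl rfl
  · rintro ⟨hc, d, hd⟩
    refine ⟨hc, fun e => Real.exp (d e.val), fun e => Real.exp_pos _, ?_⟩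
    rintro v u hu huc e e' he he'
    change Real.exp (d e.val) < Real.exp (d e'.val)
    rw [he, he', Real.exp_lt_exp]
    exact hd v u hu huc

/-- The number of steps `v` needs to reach a 2-cycle of `c`. -/
def depth {V : Type*} [Fintype V] [DecidableEq V] (c : V → V) (v : V) : ℕ :=
  #{k ∈ range (Fintype.card V) | c^[k + 2] v ≠ c^[k] v}

/-- `{v, c v}` gets weight `1 + depth c v`; all other pairs are heavier than any of these. -/
def depthWeight {V : Type*} [Fintype V] [DecidableEq V] (c : V → V) (s : Finset V) : ℕ :=
  if ∃ v ∈ s, c v ∈ s then s.sup (depth c) + 1 else Fintype.card V + 2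

def chamberFinset : Finset (Fin 4 → Fin 4) :=
  {c | (∀ v, c v ≠ v) ∧ ∀ v, ∀ n ∈ Icc (1 : ℕ) 4, c^[n] v = v → c (c v) = v}

set_option maxRecDepth 10000 in
theorem isNearestNeighbourMap_depthWeight :
    ∀ c ∈ chamberFinset, IsNearestNeighbourMap (depthWeight c) c := by
  unfold IsNearestNeighbourMap
  decide

theorem chamberFns_eq : chamberFns = chamberFinset := by
  ext c
  simp only [mem_chamberFns_iff, chamberFinset, coe_filter, mem_univ, true_and, mem_Icc]
  constructor
  · rintro ⟨hc, d, hd⟩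
    exact ⟨hc, fun v n hn hv => hd.apply_apply_eq_of_isPeriodicPt hc hn.1 hv⟩
  · intro hc
    have hw := isNearestNeighbourMap_depthWeight c (by simpa [chamberFinset] using hc)
    exact ⟨hc.1, fun s => (depthWeight c s : ℝ), fun v u hu huc => Nat.cast_lt.2 (hw v u hu huc)⟩

theorem conj_mem_chamberFns {c : Fin 4 → Fin 4} (hc : c ∈ chamberFns) (σ : Equiv.Perm (Fin 4)) :
    σ ∘ c ∘ σ.symm ∈ chamberFns := by
  obtain ⟨hfix, d, hd⟩ := mem_chamberFns_iff.1 hc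
  exact mem_chamberFns_iff.2
    ⟨fun v hv => hfix (σ.symm v) (σ.eq_symm_apply.2 hv), _, hd.conj σ⟩

def conjOrbitFinset (c : Fin 4 → Fin 4) : Finset (Fin 4 → Fin 4) :=
  univ.image fun σ : Equiv.Perm (Fin 4) => σ ∘ c ∘ σ.symm

theorem coe_conjOrbitFinset (c : Fin 4 → Fin 4) : (conjOrbitFinset c : Set _) = conjOrbit c := by
  ext c'
  simp [conjOrbitFinset, conjOrbit, eq_comm]

set_option maxRecDepth 10000 in
/-- The symmetric group `S4` acts on the set of `51` chamber functions by conjugation,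
and this action has exactly `4` orbits, of cardinalities `3`, `12`, `12` and `24`. -/
theorem chamber_orbits :
    (∀ c ∈ chamberFns, ∀ σ : Equiv.Perm (Fin 4), (σ ∘ c ∘ σ.symm) ∈ chamberFns) ∧
    ∃ c₁ c₂ c₃ c₄ : Fin 4 → Fin 4,
      c₁ ∈ chamberFns ∧ c₂ ∈ chamberFns ∧ c₃ ∈ chamberFns ∧ c₄ ∈ chamberFns ∧
      chamberFns = conjOrbit c₁ ∪ conjOrbit c₂ ∪ conjOrbit c₃ ∪ conjOrbit c₄ ∧
      Disjoint (conjOrbit c₁) (conjOrbit c₂) ∧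
      Disjoint (conjOrbit c₁) (conjOrbit c₃) ∧
      Disjoint (conjOrbit c₁) (conjOrbit c₄) ∧
      Disjoint (conjOrbit c₂) (conjOrbit c₃) ∧
      Disjoint (conjOrbit c₂) (conjOrbit c₄) ∧
      Disjoint (conjOrbit c₃) (conjOrbit c₄) ∧
      Nat.card (conjOrbit c₁) = 3 ∧ Nat.card (conjOrbit c₂) = 12 ∧
      Nat.card (conjOrbit c₃) = 12 ∧ Nat.card (conjOrbit c₄) = 24 := by
  refine ⟨fun c hc σ => conj_mem_chamberFns hc σ,
    ![1, 0, 3, 2], ![1, 0, 0, 0], ![1, 0, 0, 1], ![1, 0, 3, 0], ?_⟩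
  simp only [chamberFns_eq, ← coe_conjOrbitFinset, mem_coe, ← coe_union, coe_inj,
    disjoint_coe, Nat.card_coe_set_eq, Set.ncard_coe_finset]
  decide
end
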